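/- Let A be an n×p real matrix, Z a p×d real matrix with Zᵀ Z = I_d, and b ∈ ℝⁿ. If x̂ ∈ ℝ^d minimizes the function x ↦ ‖A Z x − b‖₂² over ℝ^d, then the vector Z x̂ ∈ ℝ^p minimizes the function y ↦ ‖A (Z Zᵀ) y − b‖₂² over ℝ^p. -/

import Mathlib

open Matrix

theorem Matrix.mulVec_mulVec_eq_self_of_mul_eq_one {m k α : Type*} [Fintype m] [Fintype k]
    [DecidableEq k] [Semiring α] {B : Matrix k m α} {Z : Matrix m k α} (h : B * Z = 1)
    (x : k → α) : B *ᵥ (Z *ᵥ x) = x := by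
  rw [mulVec_mulVec, h, one_mulVec]

/-- **Lemma 1 (rotate or project), minimizer form.**
Let `A` be `n × p`, `Z` be `p × d` with orthonormal columns (`Zᵀ Z = 1`), and
`b ∈ ℝⁿ`.  If `x̂` minimizes `x ↦ ‖A Z x − b‖₂²` over `ℝ^d`, then `Z x̂`
minimizes `y ↦ ‖A (Z Zᵀ) y − b‖₂²` over `ℝ^p`. -/
theorem suffpcr_lemma1_minimizer (n p d : ℕ)
    (A : Matrix (Fin n) (Fin p) ℝ) (Z : Matrix (Fin p) (Fin d) ℝ)
    (hZ : Zᵀ * Z = 1) (b : Fin n → ℝ) (xhat : Fin d → ℝ)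
    (hxhat : ∀ x : Fin d → ℝ,
      ∑ i, ((A * Z).mulVec xhat i - b i) ^ 2 ≤ ∑ i, ((A * Z).mulVec x i - b i) ^ 2) :
    ∀ y : Fin p → ℝ,
      ∑ i, ((A * (Z * Zᵀ)).mulVec (Z.mulVec xhat) i - b i) ^ 2 ≤
        ∑ i, ((A * (Z * Zᵀ)).mulVec y i - b i) ^ 2 := by
  intro y
  have project_eq_rotate (v : Fin p → ℝ) : (A * (Z * Zᵀ)) *ᵥ v = (A * Z) *ᵥ (Zᵀ *ᵥ v) := by
    rw [← Matrix.mul_assoc, mulVec_mulVec]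
  simpa only [project_eq_rotate, mulVec_mulVec_eq_self_of_mul_eq_one hZ] using hxhat (Zᵀ *ᵥ y)
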